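/- arXiv:2206.12204 — 3 statements merged into one kernel-verified Lean document; each statement's English description precedes it below -/
import Mathlib

section
/- Suppose two items d and d' are each always displayed in the same single display context x₀, and a counterfactual estimator given by a transformation function f depending only on (click, context) is unbiased for both items' relevances R_d and R_{d'}, with f(1,x₀) ≠ f(0,x₀). Then the affine parameters α = 1/(f(1,x₀)−f(0,x₀)) and β = −f(0,x₀)/(f(1,x₀)−f(0,x₀)) are identical for both items, and hence P(C=1|d,x₀) − P(C=1|d',x₀) = α·(R_d − R_{d'}). -/
theorem sub_eq_inv_mul_sub_of_mul_add_one_sub_mul_eq {K : Type*} [Field K] {a b p p' r r' : K}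
    (hab : a ≠ b) (hr : p * a + (1 - p) * b = r) (hr' : p' * a + (1 - p') * b = r') :
    p - p' = (a - b)⁻¹ * (r - r') := by
  have hdiff : r - r' = (a - b) * (p - p') := by rw [← hr, ← hr']; ring
  rw [hdiff, inv_mul_cancel_left₀ (sub_ne_zero.mpr hab)]

theorem same_context_same_affine_params_general
    {X : Type*} (f : Bool → X → ℝ) (x₀ : X)
    (p p' : ℝ)
    (Rd Rd' : ℝ)
    (hne : f true x₀ ≠ f false x₀)
    -- unbiasedness for item d
    (hunb : p * f true x₀ + (1 - p) * f false x₀ = Rd)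
    -- unbiasedness for item d'
    (hunb' : p' * f true x₀ + (1 - p') * f false x₀ = Rd')
    (α β α' β' : ℝ)
    (hα : α = (f true x₀ - f false x₀)⁻¹)
    (hβ : β = -(f false x₀) * (f true x₀ - f false x₀)⁻¹)
    (hα' : α' = (f true x₀ - f false x₀)⁻¹)
    (hβ' : β' = -(f false x₀) * (f true x₀ - f false x₀)⁻¹) :
    α = α' ∧ β = β' ∧ p - p' = α * (Rd - Rd') := by
  refine ⟨hα.trans hα'.symm, hβ.trans hβ'.symm, ?_⟩
  rw [hα]
  exact sub_eq_inv_mul_sub_of_mul_add_one_sub_mul_eq hne hunb hunb'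

/-- Two items `d, d'` always displayed in the same single display context
`x₀`, with the same transformation function `f` (which depends only on the click and
the display context, not on relevance). If the estimator is unbiased for both items'
relevances `R_d` and `R_d'`, with `f(1,x₀) ≠ f(0,x₀)`, then the affine parameters
`α = 1/(f(1,x₀)−f(0,x₀))` and `β = −f(0,x₀)/(f(1,x₀)−f(0,x₀))` are identical for both
items, and hence `P(C=1|d,x₀) − P(C=1|d',x₀) = α·(R_d − R_d')`. -/
theorem same_context_same_affine_params
    {X : Type*} (f : Bool → X → ℝ) (x₀ : X)
    (p p' : ℝ) (hp : p ∈ Set.Icc (0 : ℝ) 1) (hp' : p' ∈ Set.Icc (0 : ℝ) 1)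
    (Rd Rd' : ℝ) (hRd : Rd ∈ Set.Icc (0 : ℝ) 1) (hRd' : Rd' ∈ Set.Icc (0 : ℝ) 1)
    (hne : f true x₀ ≠ f false x₀)
    -- unbiasedness for item d
    (hunb : p * f true x₀ + (1 - p) * f false x₀ = Rd)
    -- unbiasedness for item d'
    (hunb' : p' * f true x₀ + (1 - p') * f false x₀ = Rd')
    (α β α' β' : ℝ)
    (hα : α = (f true x₀ - f false x₀)⁻¹)
    (hβ : β = -(f false x₀) * (f true x₀ - f false x₀)⁻¹)
    (hα' : α' = (f true x₀ - f false x₀)⁻¹)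
    (hβ' : β' = -(f false x₀) * (f true x₀ - f false x₀)⁻¹) :
    α = α' ∧ β = β' ∧ p - p' = α * (Rd - Rd') :=
  same_context_same_affine_params_general f x₀ p p' Rd Rd' hne hunb hunb' α β α' β' hα hβ hα' hβ'
end

section
/- Under the Pairwise Debiasing assumption—there exist constants t⁺_k > 0 and t⁻_k > 0 such that P(C=1|d,k,q) = t⁺_k·R_{d|q} and P(C=0|d,k,q) = t⁻_k·(1 − R_{d|q}) for all items displayed at position k—if two items d₁, d₂ (possibly in different queries) are displayed at the same position k with R_{d₁|q₁} ≠ R_{d₂|q₂}, then t⁺_k = 1 and t⁻_k = 1, so the click probability at position k equals the relevance: P(C=1|d,k,q) = R_{d|q}. -/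
theorem eq_of_mul_add_mul_one_sub_eq_of_ne {K : Type*} [CommRing K] [NoZeroDivisors K]
    {a b c x y : K} (hxy : x ≠ y) (hx : a * x + b * (1 - x) = c)
    (hy : a * y + b * (1 - y) = c) : a = c ∧ b = c := by
  have hab : a = b := by
    have hprod : (a - b) * (x - y) = 0 := by linear_combination hx - hy
    exact sub_eq_zero.mp ((mul_eq_zero.mp hprod).resolve_right (sub_ne_zero.mpr hxy))
  subst hab
  exact ⟨by linear_combination hx, by linear_combination hx⟩

theorem pairwise_debiasing_trivially_unbiased_general
    (tp tm : ℝ)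
    (R₁ R₂ : ℝ)
    (hne : R₁ ≠ R₂)
    -- click and non-click probabilities sum to one for both items
    (h₁ : tp * R₁ + tm * (1 - R₁) = 1)
    (h₂ : tp * R₂ + tm * (1 - R₂) = 1) :
    tp = 1 ∧ tm = 1 ∧ ∀ R : ℝ, tp * R = R ∧ tm * (1 - R) = 1 - R := by
  obtain ⟨rfl, rfl⟩ := eq_of_mul_add_mul_one_sub_eq_of_ne hne h₁ h₂
  exact ⟨rfl, rfl, fun R => ⟨one_mul R, one_mul (1 - R)⟩⟩

/-- Pairwise Debiasing assumption: at position `k` there are ratios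
`t⁺_k, t⁻_k > 0` with `P(C=1|d,k,q) = t⁺_k·R_{d|q}` and `P(C=0|d,k,q) = t⁻_k·(1 − R_{d|q})`,
which must sum to one for every item displayed at `k`. If two items `d₁, d₂` with
different relevances `R₁ ≠ R₂` are displayed at position `k`, then `t⁺_k = 1` and
`t⁻_k = 1`, so the click probability at `k` equals the relevance:
`P(C=1|d,k,q) = t⁺_k·R_{d|q} = R_{d|q}` for every item displayed at `k`. -/
theorem pairwise_debiasing_trivially_unbiased
    (tp tm : ℝ) (htp : 0 < tp) (htm : 0 < tm)
    (R₁ R₂ : ℝ) (hR₁ : R₁ ∈ Set.Icc (0 : ℝ) 1) (hR₂ : R₂ ∈ Set.Icc (0 : ℝ) 1)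
    (hne : R₁ ≠ R₂)
    -- click and non-click probabilities sum to one for both items
    (h₁ : tp * R₁ + tm * (1 - R₁) = 1)
    (h₂ : tp * R₂ + tm * (1 - R₂) = 1) :
    tp = 1 ∧ tm = 1 ∧ ∀ R : ℝ, tp * R = R ∧ tm * (1 - R) = 1 - R :=
  pairwise_debiasing_trivially_unbiased_general tp tm R₁ R₂ hne h₁ h₂
end

section
/- If for each position k in the support of the logging distribution, clicks satisfy the affine model P(C=1|k) = α_k·R + β_k with α_k ≥ τ for a clipping threshold τ > 0, then the clipped estimator R̂ = (1/N) Σ_i (c_i − β_{k_i})/max(α_{k_i}, τ) coincides with the unclipped estimator and is unbiased; conversely if some position k with positive probability has α_k < τ and α_k·R + β_k ≠ β_k (i.e., α_k·R ≠ 0), then the clipped estimator is biased with bias E_k[ 1{α_k < τ}·(α_k/τ − 1)·R ]. -/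
open MeasureTheory

/-! Pointwise, the clipped term `a R / max a τ` differs from `R` by exactly `(a/τ - 1) R` when
`a < τ` and by `0` otherwise, so integrating gives the bias formula. That bias term is `≤ 0` for
`R ≥ 0` and nonzero wherever `a < τ` and `a R ≠ 0`, so a non-null such set forces a strictly
negative bias. -/

section ClippedTerm

variable {𝕜 : Type*} [Field 𝕜] [LinearOrder 𝕜] {a b τ R : 𝕜}

theorem clipped_term_sub_eq (hτ : 0 < τ) :
    ((a * R + b) - b) / max a τ - R = if a < τ then (a / τ - 1) * R else 0 := by
  split_ifs with h
  · rw [max_eq_right h.le]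
    field_simp
    ring
  · have ha : a ≠ 0 := (hτ.trans_le (not_lt.1 h)).ne'
    rw [max_eq_left (not_lt.1 h)]
    field_simp
    ring

theorem clipped_bias_nonpos [IsStrictOrderedRing 𝕜] (hτ : 0 < τ) (hR : 0 ≤ R) :
    (if a < τ then (a / τ - 1) * R else 0) ≤ 0 := by
  split_ifs with h
  · exact mul_nonpos_of_nonpos_of_nonneg (by linarith [(div_lt_one hτ).2 h]) hR
  · exact le_rfl

theorem clipped_bias_ne_zero [IsStrictOrderedRing 𝕜] (hτ : 0 < τ) (h : a < τ) (haR : a * R ≠ 0) :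
    (if a < τ then (a / τ - 1) * R else 0) ≠ 0 := by
  rw [if_pos h]
  exact mul_ne_zero (by linarith [(div_lt_one hτ).2 h]) (right_ne_zero_of_mul haR)

end ClippedTerm

namespace MeasureTheory

variable {Ω : Type*} [MeasurableSpace Ω] {μ : Measure Ω} {f : Ω → ℝ}

theorem integral_sub_const_of_isProbabilityMeasure [IsProbabilityMeasure μ]
    (hf : Integrable f μ) (c : ℝ) : ∫ x, (f x - c) ∂μ = ∫ x, f x ∂μ - c := by
  simp [integral_sub hf (integrable_const c)]

theorem integral_neg_of_nonpos_of_measure_support_ne_zero (hf : f ≤ 0) (hfi : Integrable f μ)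
    (hsupp : μ (Function.support f) ≠ 0) : ∫ x, f x ∂μ < 0 := by
  have hpos : 0 < ∫ x, -f x ∂μ := by
    refine (integral_pos_iff_support_of_nonneg (fun x => neg_nonneg.2 (hf x)) hfi.neg).2 ?_
    rwa [Function.support_fun_neg, pos_iff_ne_zero]
  rw [integral_neg] at hpos
  linarith

end MeasureTheory

theorem clipped_affine_estimator_general
    {K : Type*} [MeasurableSpace K] (ν : Measure K) [IsProbabilityMeasure ν]
    (α β : K → ℝ)
    (τ : ℝ) (hτ : 0 < τ)
    (R : ℝ) (hR : R ∈ Set.Icc (0 : ℝ) 1)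
    (hint : Integrable (fun k => ((α k * R + β k) - β k) / max (α k) τ) ν)
    (hint' : Integrable (fun k => if α k < τ then (α k / τ - 1) * R else 0) ν) :
    ((∀ k, τ ≤ α k) →
        (∀ k, ((α k * R + β k) - β k) / max (α k) τ = ((α k * R + β k) - β k) / α k)
          ∧ ∫ k, ((α k * R + β k) - β k) / max (α k) τ ∂ν = R)
      ∧ ((∫ k, ((α k * R + β k) - β k) / max (α k) τ ∂ν) - R
          = ∫ k, (if α k < τ then (α k / τ - 1) * R else 0) ∂ν)
      ∧ (ν {k | α k < τ ∧ α k * R ≠ 0} ≠ 0 →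
          ∫ k, ((α k * R + β k) - β k) / max (α k) τ ∂ν ≠ R) := by
  have bias : (∫ k, ((α k * R + β k) - β k) / max (α k) τ ∂ν) - R
      = ∫ k, (if α k < τ then (α k / τ - 1) * R else 0) ∂ν := by
    simp only [← integral_sub_const_of_isProbabilityMeasure hint, clipped_term_sub_eq hτ]
  refine ⟨fun hge => ⟨fun k => by rw [max_eq_left (hge k)], ?_⟩, bias, fun hpos => ?_⟩
  · rw [← sub_eq_zero, bias]
    simp [fun k => not_lt.2 (hge k)]
  · have hneg := integral_neg_of_nonpos_of_measure_support_ne_zero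
      (fun k => clipped_bias_nonpos (a := α k) hτ hR.1) hint'
      (measure_mono_null (fun k hk => clipped_bias_ne_zero hτ hk.1 hk.2) |>.mt hpos)
    rw [← bias] at hneg
    linarith

/-- Affine click model with true parameters `α_k ∈ (0,1]`, `β_k`;
positions drawn from the logging distribution `ν`; clicks Bernoulli(`α_k·R + β_k`).
The clipped estimator replaces `α_k` by `max(α_k, τ)`; its per-sample expectation is
`E_k[((α_k·R + β_k) − β_k)/max(α_k, τ)]`.
(i) If `α_k ≥ τ` for every position, the clipped estimator coincides with the
unclipped one and is unbiased.
(ii) In general its bias equals `E_k[1{α_k < τ}·(α_k/τ − 1)·R]`.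
(iii) If positions with `α_k < τ` and `α_k·R ≠ 0` have positive probability, the
clipped estimator is biased. -/
theorem clipped_affine_estimator
    {K : Type*} [MeasurableSpace K] (ν : Measure K) [IsProbabilityMeasure ν]
    (α β : K → ℝ) (hα : ∀ k, 0 < α k) (hα1 : ∀ k, α k ≤ 1) (hαm : Measurable α)
    (τ : ℝ) (hτ : 0 < τ)
    (R : ℝ) (hR : R ∈ Set.Icc (0 : ℝ) 1)
    (hint : Integrable (fun k => ((α k * R + β k) - β k) / max (α k) τ) ν)
    (hint' : Integrable (fun k => if α k < τ then (α k / τ - 1) * R else 0) ν) :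
    ((∀ k, τ ≤ α k) →
        (∀ k, ((α k * R + β k) - β k) / max (α k) τ = ((α k * R + β k) - β k) / α k)
          ∧ ∫ k, ((α k * R + β k) - β k) / max (α k) τ ∂ν = R)
      ∧ ((∫ k, ((α k * R + β k) - β k) / max (α k) τ ∂ν) - R
          = ∫ k, (if α k < τ then (α k / τ - 1) * R else 0) ∂ν)
      ∧ (ν {k | α k < τ ∧ α k * R ≠ 0} ≠ 0 →
          ∫ k, ((α k * R + β k) - β k) / max (α k) τ ∂ν ≠ R) :=
  clipped_affine_estimator_general ν α β τ hτ R hR hint hint'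
end
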